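/- Let $\xi \in \mathbb C$ and consider formal power series in $u^1, u^2$. Define $c^1_{\beta\gamma} := \frac{\partial^2 F^1}{\partial u^\beta\partial u^\gamma}$ and $c^2_{\beta\gamma} := \frac{\partial^2 F^2}{\partial u^\beta\partial u^\gamma}$ where $F^1 = \frac{(u^1)^2/2 + u^1\xi(u^2)^2/2 - \frac{\xi(u^2)^3}{24}(4+\xi u^2)}{1+\xi u^2}$ and $F^2 = \frac{(u^2)^2}{2}$. Then, after the substitution $u^1 = (1+\xi\bar u^2)\bar u^1 - \xi(\bar u^2)^2/2$, $u^2 = \bar u^2$, the matrices $C_\gamma = (c^\alpha_{\beta\gamma})$ are given by $C_1 = \begin{pmatrix}\frac{1}{1+\xi\bar u^2} & \frac{\xi(\bar u^2 - \bar u^1)}{1+\xi\bar u^2}\\ 0 & 0\end{pmatrix}$ and $C_2 = \begin{pmatrix}\frac{\xi(\bar u^2 - \bar u^1)}{1+\xi\bar u^2} & \frac{\xi(\bar u^1 - \bar u^2)(1+\xi\bar u^1)}{1+\xi\bar u^2}\\ 0 & 1\end{pmatrix}$. -/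

import Mathlib

open scoped Classical

noncomputable section

abbrev S2 := MvPowerSeries (Fin 2) ℂ

/-- Partial derivative `∂/∂u^i` on `ℂ[[u¹,u²]]`, defined coefficientwise. -/
def pdv (i : Fin 2) (f : S2) : S2 := fun m =>
  (m i + 1) • MvPowerSeries.coeff (R := ℂ) (m + Finsupp.single i 1) f

def CC (c : ℂ) : S2 := MvPowerSeries.C (σ := Fin 2) (R := ℂ) c

def U1 : S2 := MvPowerSeries.X 0
def U2 : S2 := MvPowerSeries.X 1

/-! The potential `F¹` depends on `u¹` only through the new coordinate:
`F¹ = ½ (1 + ξu²) (ū¹)² - ξ(u²)³/6`. Hence `∂₁F¹ = ū¹` and `∂₂F¹ = -½ ξ (ū¹ - u²)²`, and the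
matrices `C_γ` are read off from the derivatives `∂₁ū¹ = w`, `∂₂ū¹ = ξ (u² - ū¹) w` of the new
coordinate, where `w = (1 + ξu²)⁻¹` (here `∂₁, ∂₂` are `pderiv ℂ 0, pderiv ℂ 1`). Each of
these identities is a polynomial identity in `u¹, u², w` modulo `(1 + ξu²) w = 1`; it is
checked in the fraction field of `ℂ[[u¹, u²]]`, where `w` becomes an honest inverse. -/

open MvPowerSeries

lemma pdv_eq_pderiv (i : Fin 2) (f : S2) : pdv i f = pderiv ℂ i f := by
  ext m
  rw [coeff_pderiv, mul_comm, ← Nat.cast_succ, ← nsmul_eq_mul]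
  rfl

@[simp] lemma pderiv_CC (i : Fin 2) (c : ℂ) : pderiv ℂ i (CC c) = 0 := pderiv_C
@[simp] lemma pderiv_zero_U1 : pderiv ℂ 0 U1 = 1 := pderiv_X_self
@[simp] lemma pderiv_one_U1 : pderiv ℂ 1 U1 = 0 := pderiv_X_of_ne (by decide)
@[simp] lemma pderiv_zero_U2 : pderiv ℂ 0 U2 = 0 := pderiv_X_of_ne (by decide)
@[simp] lemma pderiv_one_U2 : pderiv ℂ 1 U2 = 1 := pderiv_X_self

instance : IsDomain S2 := NoZeroDivisors.to_isDomain S2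

local notation "K" => FractionRing S2

instance : CharZero K := charZero_of_injective_algebraMap (algebraMap ℂ K).injective

lemma algebraMap_CC (c : ℂ) : algebraMap S2 K (CC c) = algebraMap ℂ K c := by
  rw [IsScalarTower.algebraMap_apply ℂ S2 K]
  rfl

def ubar1 (ξ : ℂ) (w : S2) : S2 := (U1 + CC ξ * CC (1/2) * U2 ^ 2) * w

def F1 (ξ : ℂ) (w : S2) : S2 :=
  (CC (1/2) * U1 ^ 2 + U1 * CC ξ * CC (1/2) * U2 ^ 2 -
    CC ξ * CC (1/24) * U2 ^ 3 * (CC 4 + CC ξ * U2)) * w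

lemma pderiv_half_mul_sq (i : Fin 2) (f : S2) :
    pderiv ℂ i (CC (1/2) * f ^ 2) = f * pderiv ℂ i f := by
  simp only [Derivation.leibniz, Derivation.leibniz_pow, pderiv_CC, smul_eq_mul, nsmul_eq_mul,
    Nat.cast_ofNat, mul_zero, add_zero]
  apply IsFractionRing.injective S2 K
  simp only [map_mul, map_pow, map_ofNat, algebraMap_CC, map_div₀, map_one]
  ring

section

variable {ξ : ℂ} {w : S2}

lemma algebraMap_eq_inv_of_mul_eq_one (hw : (1 + CC ξ * U2) * w = 1) :
    algebraMap S2 K w = (1 + algebraMap ℂ K ξ * algebraMap S2 K U2)⁻¹ := by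
  refine eq_inv_of_mul_eq_one_left ?_
  rw [mul_comm]
  simpa [algebraMap_CC] using congrArg (algebraMap S2 K) hw

lemma algebraMap_one_add_mul_ne_zero (hw : (1 + CC ξ * U2) * w = 1) :
    1 + algebraMap ℂ K ξ * algebraMap S2 K U2 ≠ 0 := by
  refine left_ne_zero_of_mul_eq_one (b := algebraMap S2 K w) ?_
  simpa [algebraMap_CC] using congrArg (algebraMap S2 K) hw

lemma pderiv_of_mul_eq_one (hw : (1 + CC ξ * U2) * w = 1) (i : Fin 2) :
    pderiv ℂ i w = -(CC ξ * w ^ 2 * pderiv ℂ i U2) := by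
  rw [(pderiv ℂ i).leibniz_of_mul_eq_one (mul_comm (1 + CC ξ * U2) w ▸ hw), map_add,
    Derivation.map_one_eq_zero, Derivation.leibniz, pderiv_CC, smul_eq_mul, smul_eq_mul]
  ring

lemma pderiv_zero_ubar1 (hw : (1 + CC ξ * U2) * w = 1) : pderiv ℂ 0 (ubar1 ξ w) = w := by
  simp only [ubar1, Derivation.leibniz, Derivation.leibniz_pow, map_add, pderiv_of_mul_eq_one hw,
    pderiv_CC, pderiv_zero_U1, pderiv_zero_U2, smul_eq_mul, mul_zero, neg_zero, add_zero, zero_add,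
    mul_one, nsmul_zero]

lemma pderiv_one_ubar1 (hw : (1 + CC ξ * U2) * w = 1) :
    pderiv ℂ 1 (ubar1 ξ w) = CC ξ * (U2 - ubar1 ξ w) * w := by
  simp only [ubar1, Derivation.leibniz, Derivation.leibniz_pow, map_add, pderiv_of_mul_eq_one hw,
    pderiv_CC, pderiv_one_U1, pderiv_one_U2, smul_eq_mul, nsmul_eq_mul, Nat.cast_ofNat, mul_zero,
    zero_add, add_zero, mul_one]
  have := algebraMap_one_add_mul_ne_zero hw
  apply IsFractionRing.injective S2 K
  simp only [map_add, map_sub, map_neg, map_mul, map_pow, map_one, map_ofNat, algebraMap_CC,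
    map_div₀, algebraMap_eq_inv_of_mul_eq_one hw]
  field_simp
  ring

lemma pderiv_zero_F1 (hw : (1 + CC ξ * U2) * w = 1) : pderiv ℂ 0 (F1 ξ w) = ubar1 ξ w := by
  simp only [F1, ubar1, Derivation.leibniz, Derivation.leibniz_pow, map_add, map_sub,
    pderiv_of_mul_eq_one hw, pderiv_CC, pderiv_zero_U1, pderiv_zero_U2, smul_eq_mul, nsmul_eq_mul,
    Nat.cast_ofNat, mul_zero, neg_zero, add_zero, zero_add, sub_zero, mul_one]
  apply IsFractionRing.injective S2 K
  simp only [map_add, map_mul, map_pow, map_one, map_ofNat, algebraMap_CC, map_div₀]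
  ring

lemma pderiv_one_F1 (hw : (1 + CC ξ * U2) * w = 1) :
    pderiv ℂ 1 (F1 ξ w) = -(CC ξ * CC (1/2) * (ubar1 ξ w - U2) ^ 2) := by
  simp only [F1, ubar1, Derivation.leibniz, Derivation.leibniz_pow, map_add, map_sub,
    pderiv_of_mul_eq_one hw, pderiv_CC, pderiv_one_U1, pderiv_one_U2, smul_eq_mul, nsmul_eq_mul,
    Nat.cast_ofNat, mul_zero, add_zero, zero_add, mul_one]
  have := algebraMap_one_add_mul_ne_zero hw
  apply IsFractionRing.injective S2 K
  simp only [map_add, map_sub, map_neg, map_mul, map_pow, map_one, map_ofNat, algebraMap_CC,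
    map_div₀, algebraMap_eq_inv_of_mul_eq_one hw]
  field_simp
  ring

lemma pderiv_zero_pderiv_one_F1 (hw : (1 + CC ξ * U2) * w = 1) :
    pderiv ℂ 0 (pderiv ℂ 1 (F1 ξ w)) = CC ξ * (U2 - ubar1 ξ w) * w := by
  simp only [pderiv_one_F1 hw, Derivation.leibniz, Derivation.leibniz_pow, Nat.add_one_sub_one,
    pow_one, map_neg, map_sub, pderiv_zero_ubar1 hw, pderiv_CC, pderiv_zero_U2, smul_eq_mul,
    nsmul_eq_mul, Nat.cast_ofNat, mul_zero, add_zero, sub_zero]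
  apply IsFractionRing.injective S2 K
  simp only [map_sub, map_neg, map_mul, map_one, map_ofNat, algebraMap_CC, map_div₀]
  ring

lemma pderiv_one_pderiv_one_F1 (hw : (1 + CC ξ * U2) * w = 1) :
    pderiv ℂ 1 (pderiv ℂ 1 (F1 ξ w)) =
      CC ξ * (ubar1 ξ w - U2) * (1 + CC ξ * ubar1 ξ w) * w := by
  simp only [pderiv_one_F1 hw, Derivation.leibniz, Derivation.leibniz_pow, Nat.add_one_sub_one,
    pow_one, map_neg, map_sub, pderiv_one_ubar1 hw, pderiv_CC, pderiv_one_U2, smul_eq_mul,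
    nsmul_eq_mul, Nat.cast_ofNat, mul_zero, add_zero]
  have := algebraMap_one_add_mul_ne_zero hw
  apply IsFractionRing.injective S2 K
  simp only [map_add, map_sub, map_neg, map_mul, map_one, map_ofNat, algebraMap_CC, map_div₀,
    algebraMap_eq_inv_of_mul_eq_one hw]
  field_simp
  ring

end

/-- the matrices `C_γ = (c^α_{βγ})` of second derivatives of the
genus-0 potentials `F¹, F²`, expressed after the substitution
`u¹ = (1+ξū²)ū¹ - ξ(ū²)²/2`, `u² = ū²` (equivalently, with
`ū¹ = b₁ = (u¹+ξ(u²)²/2)/(1+ξu²)`, `ū² = u²`, `w = (1+ξu²)⁻¹`). -/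
theorem statement19 (ξ : ℂ)
    (w : S2) (hw : (1 + CC ξ * U2) * w = 1)
    (b1 : S2) (hb1 : b1 = (U1 + CC ξ * CC (1/2) * U2 ^ 2) * w)
    (Fv : Fin 2 → S2)
    (hF1 : Fv 0 = (CC (1/2) * U1 ^ 2 + U1 * CC ξ * CC (1/2) * U2 ^ 2 -
      CC ξ * CC (1/24) * U2 ^ 3 * (CC 4 + CC ξ * U2)) * w)
    (hF2 : Fv 1 = CC (1/2) * U2 ^ 2)
    (C1 C2 : Matrix (Fin 2) (Fin 2) S2)
    (hC1 : C1 = !![w, CC ξ * (U2 - b1) * w; 0, 0])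
    (hC2 : C2 = !![CC ξ * (U2 - b1) * w, CC ξ * (b1 - U2) * (1 + CC ξ * b1) * w; 0, 1]) :
    (∀ α β : Fin 2, pdv β (pdv 0 (Fv α)) = C1 α β) ∧
    (∀ α β : Fin 2, pdv β (pdv 1 (Fv α)) = C2 α β) := by
  replace hF1 : Fv 0 = F1 ξ w := hF1
  replace hb1 : b1 = ubar1 ξ w := hb1
  replace hF2 (i : Fin 2) : pderiv ℂ i (Fv 1) = U2 * pderiv ℂ i U2 := by
    rw [hF2, pderiv_half_mul_sq]
  subst hb1 hC1 hC2
  simp only [pdv_eq_pderiv]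
  constructor <;> intro α β <;> fin_cases α <;> fin_cases β <;>
    simp [hF1, hF2, pderiv_zero_F1 hw, pderiv_zero_ubar1 hw,
      pderiv_one_ubar1 hw, pderiv_zero_pderiv_one_F1 hw, pderiv_one_pderiv_one_F1 hw]

end
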